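/- arXiv:2110.04774 — 2 statements merged into one kernel-verified Lean document; each statement's English description precedes it below -/
import Mathlib

section
/- Let ξ be a nonzero complex number and k ≥ 1 an integer. Then the set Ω = {z ∈ ℂ : |z^k − ξ| < |ξ|} is an open subset of ℂ that does not contain 0, and Ω has exactly k connected components. -/
/-- For a nonzero complex number `ξ` and an integer `k ≥ 1`, the set
`Ω = {z : |z^k − ξ| < |ξ|}` is open, does not contain `0`, and has exactly `k`
connected components. -/
theorem stmt_0 (ξ : ℂ) (hξ : ξ ≠ 0) (k : ℕ) (hk : 1 ≤ k) :
    IsOpen {z : ℂ | ‖z ^ k - ξ‖ < ‖ξ‖} ∧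
    (0 : ℂ) ∉ {z : ℂ | ‖z ^ k - ξ‖ < ‖ξ‖} ∧
    Nat.card (ConnectedComponents ↥{z : ℂ | ‖z ^ k - ξ‖ < ‖ξ‖}) = k := by
  have hk0 : k ≠ 0 := by omega
  have hkC : (k : ℂ) ≠ 0 := by exact_mod_cast hk0
  have habs : (0 : ℝ) < ‖ξ‖ := norm_pos_iff.mpr hξ
  set Ω : Set ℂ := {z : ℂ | ‖z ^ k - ξ‖ < ‖ξ‖} with hΩdef
  have hopen : IsOpen Ω := by
    have hc : Continuous fun z : ℂ => ‖z ^ k - ξ‖ :=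
      continuous_norm.comp ((continuous_pow k).sub continuous_const)
    exact isOpen_lt hc continuous_const
  have h0not : (0 : ℂ) ∉ Ω := by
    simp [hΩdef, zero_pow hk0]
  refine ⟨hopen, h0not, ?_⟩
  -- the disc
  set D : Set ℂ := Metric.ball ξ (‖ξ‖) with hDdef
  have hDmem : ∀ z ∈ Ω, z ^ k ∈ D := by
    intro z hz
    rw [hDdef, Metric.mem_ball, Complex.dist_eq]; exact hz
  have hD0 : ∀ w ∈ D, w ≠ 0 := by
    intro w hw h
    rw [hDdef, Metric.mem_ball, Complex.dist_eq, h, zero_sub, norm_neg] at hw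
    exact lt_irrefl _ hw
  have hz0 : ∀ z ∈ Ω, z ≠ 0 := by
    intro z hz h
    exact hD0 _ (hDmem z hz) (by rw [h, zero_pow hk0])
  have hslit : ∀ w ∈ D, w / ξ ∈ Complex.slitPlane := by
    intro w hw
    rw [Complex.mem_slitPlane_iff]
    left
    have h1 : ‖w / ξ - 1‖ < 1 := by
      have : w / ξ - 1 = (w - ξ) / ξ := by field_simp
      rw [this, norm_div]
      rw [div_lt_one habs]
      simpa [hDdef, Metric.mem_ball, Complex.dist_eq] using hw
    have h2 := Complex.abs_re_le_norm (w / ξ - 1)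
    have h3 : (w / ξ - 1).re = (w / ξ).re - 1 := by simp
    have h4 : |(w / ξ).re - 1| < 1 := by rw [← h3]; exact lt_of_le_of_lt h2 h1
    have := abs_lt.mp h4
    linarith [this.1]
  -- branch of the k-th root on D
  set L : ℂ → ℂ := fun w => Complex.exp (Complex.log (w / ξ) / k) with hLdef
  have hLcont : ContinuousOn L D := by
    apply Complex.continuous_exp.comp_continuousOn
    exact (ContinuousOn.clog ((continuous_id.div_const ξ).continuousOn) hslit).div_const _
  have hLpow : ∀ w ∈ D, L w ^ k = w / ξ := by
    intro w hw
    rw [hLdef]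
    simp only
    rw [← Complex.exp_nat_mul, mul_div_cancel₀ _ hkC,
      Complex.exp_log (div_ne_zero (hD0 w hw) hξ)]
  have hL0 : ∀ w, L w ≠ 0 := fun w => Complex.exp_ne_zero _
  set c : ℂ := Complex.exp (Complex.log ξ / k) with hcdef
  have hc : c ^ k = ξ := by
    rw [hcdef, ← Complex.exp_nat_mul, mul_div_cancel₀ _ hkC, Complex.exp_log hξ]
  have hc0 : c ≠ 0 := Complex.exp_ne_zero _
  -- the "canonical root" on Ω
  set r : ℂ → ℂ := fun z => c * L (z ^ k) with hrdef
  have hrpow : ∀ z ∈ Ω, r z ^ k = z ^ k := by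
    intro z hz
    rw [hrdef]
    simp only
    rw [mul_pow, hc, hLpow _ (hDmem z hz), mul_div_cancel₀ _ hξ]
  have hr0 : ∀ z, r z ≠ 0 := fun z => mul_ne_zero hc0 (hL0 _)
  set φ : ℂ → ℂ := fun z => z / r z with hφdef
  have hφroot : ∀ z ∈ Ω, φ z ^ k = 1 := by
    intro z hz
    rw [hφdef]
    simp only
    rw [div_pow, hrpow z hz, div_self (pow_ne_zero _ (hz0 z hz))]
  have hφcont : ContinuousOn φ Ω := by
    apply ContinuousOn.div continuousOn_id
    · exact continuousOn_const.mul (hLcont.comp ((continuous_pow k).continuousOn) hDmem)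
    · intro z _; exact hr0 z
  -- sections over D for each root of unity
  set ψ : ℂ → ℂ → ℂ := fun ζ w => ζ * (c * L w) with hψdef
  have hψpow : ∀ ζ : ℂ, ζ ^ k = 1 → ∀ w ∈ D, (ψ ζ w) ^ k = w := by
    intro ζ hζ w hw
    rw [hψdef]
    simp only
    rw [mul_pow, hζ, one_mul, mul_pow, hc, hLpow _ hw, mul_div_cancel₀ _ hξ]
  have hψmem : ∀ ζ : ℂ, ζ ^ k = 1 → ∀ w ∈ D, ψ ζ w ∈ Ω := by
    intro ζ hζ w hw
    have := hψpow ζ hζ w hw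
    rw [hΩdef, Set.mem_setOf_eq, this]
    simpa [hDdef, Metric.mem_ball, Complex.dist_eq] using hw
  have hψφ : ∀ ζ : ℂ, ζ ^ k = 1 → ∀ w ∈ D, φ (ψ ζ w) = ζ := by
    intro ζ hζ w hw
    have hpow := hψpow ζ hζ w hw
    have : r (ψ ζ w) = c * L w := by rw [hrdef]; simp only; rw [hpow]
    rw [hφdef]
    simp only
    rw [this, hψdef]
    simp only
    rw [mul_div_assoc, div_self (mul_ne_zero hc0 (hL0 _)), mul_one]
  -- fibers of φ
  have hfiber : ∀ ζ : ℂ, ζ ^ k = 1 → {z | z ∈ Ω ∧ φ z = ζ} = ψ ζ '' D := by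
    intro ζ hζ
    ext z
    constructor
    · rintro ⟨hz, hφz⟩
      refine ⟨z ^ k, hDmem z hz, ?_⟩
      have : z = φ z * r z := by
        rw [hφdef]; simp only; rw [div_mul_cancel₀ _ (hr0 z)]
      rw [hψdef]
      simp only
      rw [← hφz]
      exact this.symm
    · rintro ⟨w, hw, rfl⟩
      exact ⟨hψmem ζ hζ w hw, hψφ ζ hζ w hw⟩
  have hψconn : ∀ ζ : ℂ, ζ ^ k = 1 → IsPreconnected (ψ ζ '' D) := by
    intro ζ hζ
    apply IsPreconnected.image
    · exact (convex_ball ξ (‖ξ‖)).isPreconnected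
    · exact (continuousOn_const.mul (continuousOn_const.mul hLcont))
  -- the finite set of k-th roots of unity
  set R : Set ℂ := ↑(Polynomial.nthRootsFinset k (1 : ℂ)) with hRdef
  have hRmem : ∀ ζ : ℂ, ζ ∈ R ↔ ζ ^ k = 1 := by
    intro ζ
    rw [hRdef, Finset.mem_coe, Polynomial.mem_nthRootsFinset (by omega) (1 : ℂ)]
  haveI : Finite ↥R := (Finset.finite_toSet _).to_subtype
  haveI : TotallyDisconnectedSpace ↥R := by infer_instance
  -- the classifying map
  set Φ : ↥Ω → ↥R := fun z => ⟨φ z, (hRmem _).mpr (hφroot z z.2)⟩ with hΦdef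
  have hΦcont : Continuous Φ := Continuous.subtype_mk (hφcont.restrict) _
  set F : ConnectedComponents ↥Ω → ↥R := hΦcont.connectedComponentsLift with hFdef
  have hFcoe : ∀ z : ↥Ω, F (ConnectedComponents.mk z) = Φ z := fun z => rfl
  have hFbij : Function.Bijective F := by
    constructor
    · intro a b hab
      obtain ⟨x, rfl⟩ := ConnectedComponents.surjective_coe a
      obtain ⟨y, rfl⟩ := ConnectedComponents.surjective_coe b
      rw [hFcoe, hFcoe] at hab
      set ζ : ℂ := φ x with hζdef
      have hζ : ζ ^ k = 1 := hφroot x x.2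
      have hφy : φ (y : ℂ) = ζ := by
        have := congrArg Subtype.val hab
        simpa [hΦdef] using this.symm
      have hxS : (x : ℂ) ∈ ψ ζ '' D := by
        rw [← hfiber ζ hζ]; exact ⟨x.2, rfl⟩
      have hyS : (y : ℂ) ∈ ψ ζ '' D := by
        rw [← hfiber ζ hζ]; exact ⟨y.2, hφy⟩
      have hsub : ψ ζ '' D ⊆ Ω := by
        rintro _ ⟨w, hw, rfl⟩; exact hψmem ζ hζ w hw
      -- pull back to the subtype
      set T : Set ↥Ω := Subtype.val ⁻¹' (ψ ζ '' D) with hTdef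
      have himg : Subtype.val '' T = ψ ζ '' D := by
        rw [hTdef, Subtype.image_preimage_coe]
        exact Set.inter_eq_self_of_subset_right hsub
      have hTconn : IsPreconnected T := by
        rw [← Topology.IsInducing.isPreconnected_image Topology.IsInducing.subtypeVal,
          himg]
        exact hψconn ζ hζ
      have hxT : x ∈ T := hxS
      have hyT : y ∈ T := hyS
      rw [ConnectedComponents.coe_eq_coe]
      have h1 := hTconn.subset_connectedComponent hxT hyT
      exact connectedComponent_eq h1
    · intro ζ
      have hζ : (ζ : ℂ) ^ k = 1 := (hRmem _).mp ζ.2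
      have hξD : ξ ∈ D := Metric.mem_ball_self habs
      refine ⟨ConnectedComponents.mk ⟨ψ ζ ξ, hψmem ζ hζ ξ hξD⟩, ?_⟩
      rw [hFcoe]
      exact Subtype.ext (hψφ ζ hζ ξ hξD)
  rw [Nat.card_eq_of_bijective F hFbij]
  rw [hRdef, Nat.card_coe_set_eq, Set.ncard_coe_finset]
  exact (Complex.isPrimitiveRoot_exp k hk0).card_nthRootsFinset
end

section
/- Let ξ be a nonzero complex number and k ≥ 1 an integer, and let Ω = {z ∈ ℂ : |z^k − ξ| < |ξ|}. Then every connected component of Ω contains exactly one k-th root of ξ; consequently, the map sending a k-th root r of ξ to the connected component of Ω containing r is a bijection from the set {z ∈ ℂ : z^k = ξ} onto the set of connected components of Ω. -/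
open Complex Set

/-- A finite preconnected set in a T1 space is a subsingleton. -/
lemma finite_preconnected_subsingleton {X : Type*} [TopologicalSpace X] [T1Space X]
    {s : Set X} (hfin : s.Finite) (hconn : IsPreconnected s) : s.Subsingleton := by
  intro a ha b hb
  by_contra hab
  have h1 : IsClosed ({a} : Set X) := isClosed_singleton
  have h2 : IsClosed (s \ {a}) := (hfin.subset diff_subset).isClosed
  have := isPreconnected_closed_iff.mp hconn {a} (s \ {a}) h1 h2
    (fun x hx => by by_cases h : x = a <;> simp [h, hx])
    ⟨a, ha, rfl⟩ ⟨b, hb, hb, fun h => hab (Set.mem_singleton_iff.mp h).symm⟩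
  obtain ⟨x, -, hx1, -, hx2⟩ := this
  exact hx2 hx1

/-- For nonzero `ξ : ℂ` and `k ≥ 1`, with `Ω = {z : |z^k − ξ| < |ξ|}`:
every connected component of `Ω` contains exactly one `k`-th root of `ξ`, and
`r ↦ connectedComponentIn Ω r` is a bijection from the `k`-th roots of `ξ`
onto the set of connected components of `Ω`. -/
theorem stmt_1 (ξ : ℂ) (hξ : ξ ≠ 0) (k : ℕ) (hk : 1 ≤ k) :
    (∀ z ∈ {z : ℂ | ‖z ^ k - ξ‖ < ‖ξ‖},
      ∃! r : ℂ, r ^ k = ξ ∧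
        r ∈ connectedComponentIn {z : ℂ | ‖z ^ k - ξ‖ < ‖ξ‖} z) ∧
    Set.BijOn
      (fun r : ℂ => connectedComponentIn {z : ℂ | ‖z ^ k - ξ‖ < ‖ξ‖} r)
      {r : ℂ | r ^ k = ξ}
      {S : Set ℂ | ∃ z ∈ {z : ℂ | ‖z ^ k - ξ‖ < ‖ξ‖},
        S = connectedComponentIn {z : ℂ | ‖z ^ k - ξ‖ < ‖ξ‖} z} := by
  set Ω : Set ℂ := {z : ℂ | ‖z ^ k - ξ‖ < ‖ξ‖} with hΩdef
  have hk0 : (k : ℂ) ≠ 0 := Nat.cast_ne_zero.mpr (by omega)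
  -- basic facts about Ω
  have hne : ∀ z ∈ Ω, z ^ k ≠ 0 := by
    intro z hz h0
    simp only [hΩdef, mem_setOf_eq, h0, zero_sub, norm_neg] at hz
    exact absurd hz (lt_irrefl _)
  -- points of the ball (after division by ξ) lie in the slit plane
  have hslit : ∀ w : ℂ, ‖w - ξ‖ < ‖ξ‖ → w / ξ ∈ slitPlane := by
    intro w hw
    have hwξ : ‖w / ξ - 1‖ < 1 := by
      have : ‖(w - ξ) / ξ‖ < 1 := by
        rw [norm_div]
        rw [div_lt_one (norm_pos_iff.mpr hξ)]
        exact hw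
      simpa [sub_div, div_self hξ] using this
    set u := w / ξ with hu
    have h1 : ‖u - 1‖ ^ 2 < 1 ^ 2 := by
      apply sq_lt_sq' <;> nlinarith [norm_nonneg (u - 1)]
    rw [Complex.sq_norm, Complex.normSq_apply] at h1
    have hre : (u - 1).re = u.re - 1 := by simp
    have him : (u - 1).im = u.im := by simp
    rw [hre, him] at h1
    rw [Complex.mem_slitPlane_iff]
    by_cases h : u.im = 0
    · left; nlinarith
    · right; exact h
  have hw0 : ∀ w : ℂ, ‖w - ξ‖ < ‖ξ‖ → w ≠ 0 := by
    intro w hw h0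
    simp only [h0, zero_sub, norm_neg] at hw
    exact absurd hw (lt_irrefl _)
  -- the "root selection" function
  set ρ : ℂ → ℂ := fun z => z * Complex.exp (-(k : ℂ)⁻¹ * Complex.log (z ^ k / ξ)) with hρdef
  have hρ_root : ∀ z ∈ Ω, (ρ z) ^ k = ξ := by
    intro z hz
    have h0 : z ^ k / ξ ≠ 0 := div_ne_zero (hne z hz) hξ
    simp only [hρdef]
    rw [mul_pow, ← Complex.exp_nat_mul]
    have : (k : ℂ) * (-(k : ℂ)⁻¹ * Complex.log (z ^ k / ξ)) = -Complex.log (z ^ k / ξ) := by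
      field_simp
    rw [this, Complex.exp_neg, Complex.exp_log h0]
    field_simp
    exact div_self (hne z hz)
  have hρ_fix : ∀ r : ℂ, r ^ k = ξ → ρ r = r := by
    intro r hr
    simp [hρdef, hr, div_self hξ, Complex.log_one]
  have hroot_mem : ∀ r : ℂ, r ^ k = ξ → r ∈ Ω := by
    intro r hr
    simp [hΩdef, hr, sub_self, norm_pos_iff.mpr hξ]
  -- continuity of ρ on Ω
  have hρ_cont : ContinuousOn ρ Ω := by
    intro z hz
    apply ContinuousAt.continuousWithinAt
    have h1 : ContinuousAt (fun z : ℂ => z ^ k / ξ) z := by fun_prop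
    have h2 : ContinuousAt (fun z : ℂ => Complex.log (z ^ k / ξ)) z :=
      h1.clog (hslit _ hz)
    exact continuousAt_id.mul ((h2.const_mul _).cexp)
  -- ρ z lies in the connected component of z within Ω
  have hρ_comp : ∀ z ∈ Ω, ρ z ∈ connectedComponentIn Ω z := by
    intro z hz
    set r := ρ z with hr
    have hrk : r ^ k = ξ := hρ_root z hz
    -- the connected set: image of the ball under the branch w ↦ r * exp(k⁻¹ log (w/ξ))
    set g : ℂ → ℂ := fun w => r * Complex.exp ((k : ℂ)⁻¹ * Complex.log (w / ξ)) with hg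
    set B : Set ℂ := Metric.ball ξ (‖ξ‖) with hB
    have hBmem : ∀ w ∈ B, ‖w - ξ‖ < ‖ξ‖ := by
      intro w hw
      exact mem_ball_iff_norm.mp hw
    have hgk : ∀ w ∈ B, (g w) ^ k = w := by
      intro w hw
      have hw0' : w ≠ 0 := hw0 w (hBmem w hw)
      have h0 : w / ξ ≠ 0 := div_ne_zero hw0' hξ
      simp only [hg]
      rw [mul_pow, ← Complex.exp_nat_mul]
      have : (k : ℂ) * ((k : ℂ)⁻¹ * Complex.log (w / ξ)) = Complex.log (w / ξ) := by
        rw [← mul_assoc, mul_inv_cancel₀ hk0, one_mul]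
      rw [this, Complex.exp_log h0, hrk]
      rw [mul_div_cancel₀ _ hξ]
    have hgΩ : ∀ w ∈ B, g w ∈ Ω := by
      intro w hw
      simp only [hΩdef, mem_setOf_eq, hgk w hw]
      exact hBmem w hw
    have hgcont : ContinuousOn g B := by
      intro w hw
      apply ContinuousAt.continuousWithinAt
      have h1 : ContinuousAt (fun w : ℂ => w / ξ) w := by fun_prop
      have h2 : ContinuousAt (fun w : ℂ => Complex.log (w / ξ)) w :=
        h1.clog (hslit _ (hBmem w hw))
      exact ((h2.const_mul _).cexp).const_mul _
    have hBconn : IsPreconnected B := (convex_ball ξ (‖ξ‖)).isPreconnected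
    have hT : IsPreconnected (g '' B) := hBconn.image g hgcont
    have hTsub : g '' B ⊆ Ω := by rintro _ ⟨w, hw, rfl⟩; exact hgΩ w hw
    have hzB : z ^ k ∈ B := by
      simp only [hB, Metric.mem_ball, Complex.dist_eq]
      exact hz
    have hzg : g (z ^ k) = z := by
      simp only [hg, hr, hρdef]
      rw [mul_assoc, ← Complex.exp_add, neg_mul, neg_add_cancel, Complex.exp_zero, mul_one]
    have hzmem : z ∈ g '' B := ⟨z ^ k, hzB, hzg⟩
    have hrmem : r ∈ g '' B := by
      refine ⟨ξ, ?_, ?_⟩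
      · simp [hB, Metric.mem_ball, Complex.dist_eq, norm_pos_iff.mpr hξ]
      · simp [hg, div_self hξ, Complex.log_one]
    exact hT.subset_connectedComponentIn hzmem hTsub hrmem
  -- finiteness of the root set
  have hroots_fin : {r : ℂ | r ^ k = ξ}.Finite := by
    apply Set.Finite.subset (Polynomial.nthRoots k ξ).toFinset.finite_toSet
    intro r hr
    simp only [Finset.mem_coe, Multiset.mem_toFinset]
    exact (Polynomial.mem_nthRoots (by omega)).mpr hr
  -- key uniqueness: any two roots in the same connected component are equal
  have hkey : ∀ z ∈ Ω, ∀ r r' : ℂ, r ^ k = ξ → r' ^ k = ξ →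
      r ∈ connectedComponentIn Ω z → r' ∈ connectedComponentIn Ω z → r = r' := by
    intro z hz r r' hr hr' hrc hr'c
    set C := connectedComponentIn Ω z with hC
    have hCconn : IsPreconnected C := isPreconnected_connectedComponentIn
    have hCsub : C ⊆ Ω := connectedComponentIn_subset Ω z
    have himg : IsPreconnected (ρ '' C) := hCconn.image ρ (hρ_cont.mono hCsub)
    have himg_sub : ρ '' C ⊆ {r : ℂ | r ^ k = ξ} := by
      rintro _ ⟨w, hw, rfl⟩
      exact hρ_root w (hCsub hw)
    have hsub : (ρ '' C).Subsingleton :=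
      finite_preconnected_subsingleton (hroots_fin.subset himg_sub) himg
    have h1 : ρ r = r := hρ_fix r hr
    have h2 : ρ r' = r' := hρ_fix r' hr'
    calc r = ρ r := h1.symm
      _ = ρ r' := hsub ⟨r, hrc, rfl⟩ ⟨r', hr'c, rfl⟩
      _ = r' := h2
  constructor
  · intro z hz
    refine ⟨ρ z, ⟨hρ_root z hz, hρ_comp z hz⟩, ?_⟩
    rintro r' ⟨hr', hr'c⟩
    exact hkey z hz r' (ρ z) hr' (hρ_root z hz) hr'c (hρ_comp z hz)
  · refine ⟨?_, ?_, ?_⟩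
    · intro r hr
      exact ⟨r, hroot_mem r hr, rfl⟩
    · intro r hr r' hr' heq
      simp only at heq
      have h1 : r ∈ connectedComponentIn Ω r := mem_connectedComponentIn (hroot_mem r hr)
      have h2 : r' ∈ connectedComponentIn Ω r := by
        rw [heq]; exact mem_connectedComponentIn (hroot_mem r' hr')
      exact hkey r (hroot_mem r hr) r r' hr hr' h1 h2
    · rintro S ⟨z, hz, rfl⟩
      refine ⟨ρ z, hρ_root z hz, ?_⟩
      simp only
      exact (connectedComponentIn_eq (hρ_comp z hz)).symm
end
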